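/- Let N ≥ 2 be an integer, x₀ ∈ ℂ, μ ∈ ℂ, and let h have form (F_N) at x₀ (h analytic on a punctured disc around x₀, h(x) + N(N−1)/(x−x₀)² extending analytically across x₀ with odd Taylor coefficients of orders 1, …, 2N−3 vanishing). Let u be a solution of u'' + h·u = 0 of the dominant form u(x) = (x−x₀)^{1−N}·ψ(x), where ψ is analytic at x₀, ψ(x₀) ≠ 0, and the odd-order Taylor coefficients of ψ of orders 1, 3, …, 2N−3 vanish. Then the function h̃(x) := μ − h(x) − 2·(u'(x)/u(x))² has form (F_{N−1}) at x₀: h̃(x) + (N−1)(N−2)/(x−x₀)² extends analytically across x₀ and (when N ≥ 3) the odd-order Taylor coefficients of this extension of orders 1, 3, …, 2N−5 vanish; in particular for N = 2 the function h̃ itself extends analytically across x₀. -/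

import Mathlib

/-!
Write `u'/u = (1 - N)/(x - x₀) + φ` with `φ = ψ'/ψ`. The double pole cancels identically and the
new coefficient is `μ - g + 4(N - 1) φ/(x - x₀) - 2φ²`, which is analytic because `φ(x₀) = 0`.

The odd Taylor coefficients of `f` at `c` of orders below `n` vanish iff `f y - f (2c - y)` has
analytic order at least `n`; the even ones vanish iff `f y + f (2c - y)` does. In this form the
parity conditions propagate through sums, products and quotients by additivity of the analytic
order: `ψ` is even up to order `2N - 2`, so `ψ'` is odd up to order `2N - 3`, hence so is `φ`,
and `φ/(x - x₀)` is even up to order `2N - 4`.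
-/

open Filter Topology

section Reflection

variable {𝕜 E : Type*} [NontriviallyNormedField 𝕜] [NormedAddCommGroup E] [NormedSpace 𝕜 E]
  {f : 𝕜 → E} {c : 𝕜}

theorem AnalyticAt.comp_reflect (hf : AnalyticAt 𝕜 f c) :
    AnalyticAt 𝕜 (fun y => f (2 * c - y)) c := by
  have hf' : AnalyticAt 𝕜 f (2 * c - c) := by rwa [two_mul, add_sub_cancel_right]
  exact hf'.comp (by fun_prop)

theorem AnalyticAt.dslope (hf : AnalyticAt 𝕜 f c) : AnalyticAt 𝕜 (dslope f c) c := by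
  obtain ⟨p, hp⟩ := hf
  exact ⟨p.fslope, hp.has_fpower_series_dslope_fslope⟩

variable [CompleteSpace E]

theorem iteratedDeriv_sub_comp_reflect (hf : AnalyticAt 𝕜 f c) (k : ℕ) :
    iteratedDeriv k (fun y => f y - f (2 * c - y)) c
      = (1 - (-1 : 𝕜) ^ k) • iteratedDeriv k f c := by
  rw [iteratedDeriv_fun_sub hf.contDiffAt hf.comp_reflect.contDiffAt,
    iteratedDeriv_comp_const_sub]
  simp only [two_mul, add_sub_cancel_right, sub_smul, one_smul]

theorem iteratedDeriv_add_comp_reflect (hf : AnalyticAt 𝕜 f c) (k : ℕ) :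
    iteratedDeriv k (fun y => f y + f (2 * c - y)) c
      = (1 + (-1 : 𝕜) ^ k) • iteratedDeriv k f c := by
  rw [iteratedDeriv_fun_add hf.contDiffAt hf.comp_reflect.contDiffAt,
    iteratedDeriv_comp_const_sub]
  simp only [two_mul, add_sub_cancel_right, add_smul, one_smul]

variable [CharZero 𝕜]

theorem natCast_le_analyticOrderAt_sub_comp_reflect_iff (hf : AnalyticAt 𝕜 f c) {n : ℕ} :
    n ≤ analyticOrderAt (fun y => f y - f (2 * c - y)) c ↔
      ∀ k < n, Odd k → iteratedDeriv k f c = 0 := by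
  rw [natCast_le_analyticOrderAt_iff_iteratedDeriv_eq_zero (hf.fun_sub hf.comp_reflect)]
  refine forall₂_congr fun k _ => ?_
  rcases Nat.even_or_odd k with hk | hk
  · simp [iteratedDeriv_sub_comp_reflect hf, hk.neg_one_pow, Nat.not_odd_iff_even.mpr hk]
  · simp [iteratedDeriv_sub_comp_reflect hf, hk.neg_one_pow, hk, one_add_one_eq_two]

theorem natCast_le_analyticOrderAt_add_comp_reflect_iff (hf : AnalyticAt 𝕜 f c) {n : ℕ} :
    n ≤ analyticOrderAt (fun y => f y + f (2 * c - y)) c ↔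
      ∀ k < n, Even k → iteratedDeriv k f c = 0 := by
  rw [natCast_le_analyticOrderAt_iff_iteratedDeriv_eq_zero (hf.fun_add hf.comp_reflect)]
  refine forall₂_congr fun k _ => ?_
  rcases Nat.even_or_odd k with hk | hk
  · simp [iteratedDeriv_add_comp_reflect hf, hk.neg_one_pow, hk, one_add_one_eq_two]
  · simp [iteratedDeriv_add_comp_reflect hf, hk.neg_one_pow, Nat.not_even_iff_odd.mpr hk]

end Reflection

section AnalyticOrder

variable {𝕜 : Type*} [NontriviallyNormedField 𝕜] {f g : 𝕜 → 𝕜} {c : 𝕜}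

theorem le_analyticOrderAt_mul_left (hf : AnalyticAt 𝕜 f c) :
    analyticOrderAt g c ≤ analyticOrderAt (f * g) c := by
  by_cases hg : AnalyticAt 𝕜 g c
  · rw [analyticOrderAt_mul hf hg]
    exact le_add_self
  · simp [analyticOrderAt_of_not_analyticAt hg]

theorem le_analyticOrderAt_mul_right (hg : AnalyticAt 𝕜 g c) :
    analyticOrderAt f c ≤ analyticOrderAt (f * g) c := by
  rw [mul_comm]
  exact le_analyticOrderAt_mul_left hg

theorem analyticOrderAt_dslope_sub_comp_reflect_add_one (hf : AnalyticAt 𝕜 f c) (hf0 : f c = 0) :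
    analyticOrderAt (fun y => dslope f c y - dslope f c (2 * c - y)) c + 1
      = analyticOrderAt (fun y => f y + f (2 * c - y)) c := by
  have hfactor : (fun y => f y + f (2 * c - y))
      = (· - c) * fun y => dslope f c y - dslope f c (2 * c - y) := by
    funext y
    rw [Pi.mul_apply, ← sub_smul_dslope_of_zero hf0 y, ← sub_smul_dslope_of_zero hf0 (2 * c - y)]
    simp only [smul_eq_mul]
    ring
  rw [hfactor, analyticOrderAt_mul (by fun_prop) (hf.dslope.fun_sub hf.dslope.comp_reflect),
    analyticOrderAt_id_sub_const_self, add_comm]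

variable [CompleteSpace 𝕜]

theorem AnalyticAt.logDeriv (hf : AnalyticAt 𝕜 f c) (hf0 : f c ≠ 0) :
    AnalyticAt 𝕜 (logDeriv f) c :=
  hf.deriv.div hf hf0

theorem logDeriv_eventuallyEq_of_eventuallyEq_zpow_mul {u ψ : 𝕜 → 𝕜} (m : ℤ)
    (hψ : AnalyticAt 𝕜 ψ c) (hψ0 : ψ c ≠ 0)
    (hu : ∀ᶠ x in 𝓝[≠] c, u x = (x - c) ^ m * ψ x) :
    ∀ᶠ x in 𝓝[≠] c, logDeriv u x = m / (x - c) + logDeriv ψ x := by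
  filter_upwards [logDeriv_congr_nhdsNE (hu : u =ᶠ[𝓝[≠] c] _), self_mem_nhdsWithin,
    nhdsWithin_le_nhds hψ.eventually_analyticAt,
    nhdsWithin_le_nhds (hψ.continuousAt.eventually_ne hψ0)] with x hx hxc hψx hψx0
  have hxc : x - c ≠ 0 := sub_ne_zero.2 hxc
  rw [hx, logDeriv_mul (f := fun x => (x - c) ^ m) x (zpow_ne_zero _ hxc) hψx0
    ((differentiableAt_id.sub_const c).zpow (.inl hxc)) hψx.differentiableAt,
    logDeriv_fun_zpow (by fun_prop)]
  simp [logDeriv_apply, div_eq_mul_inv]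

variable [CharZero 𝕜]

theorem natCast_le_analyticOrderAt_logDeriv_add_comp_reflect {ψ : 𝕜 → 𝕜}
    (hψ : AnalyticAt 𝕜 ψ c) (hψ0 : ψ c ≠ 0) {n : ℕ}
    (hodd : ∀ k < n + 1, Odd k → iteratedDeriv k ψ c = 0) :
    n ≤ analyticOrderAt (fun y => logDeriv ψ y + logDeriv ψ (2 * c - y)) c := by
  set A := fun y => deriv ψ y + deriv ψ (2 * c - y)
  set B := fun y => ψ y - ψ (2 * c - y)
  have hA : n ≤ analyticOrderAt A c :=
    (natCast_le_analyticOrderAt_add_comp_reflect_iff hψ.deriv).2 fun k hk hke => by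
      rw [← iteratedDeriv_succ']
      exact hodd (k + 1) (by omega) hke.add_one
  have hB : n ≤ analyticOrderAt B c :=
    ((natCast_le_analyticOrderAt_sub_comp_reflect_iff hψ).2 hodd).trans' (by norm_cast; omega)
  have hψσ0 : ψ (2 * c - c) ≠ 0 := by rwa [two_mul, add_sub_cancel_right]
  have hquot : (fun y => logDeriv ψ y + logDeriv ψ (2 * c - y)) =ᶠ[𝓝 c]
      (fun y => ψ y * A y - deriv ψ y * B y) * fun y => (ψ y * ψ (2 * c - y))⁻¹ := by
    filter_upwards [hψ.continuousAt.eventually_ne hψ0,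
      hψ.comp_reflect.continuousAt.eventually_ne hψσ0] with y hy hyσ
    simp only [logDeriv_apply, Pi.mul_apply, A, B]
    field_simp
    ring
  rw [analyticOrderAt_congr hquot]
  refine le_trans ?_ (le_analyticOrderAt_mul_right
    ((hψ.mul hψ.comp_reflect).inv (mul_ne_zero hψ0 hψσ0)))
  exact (le_min (hA.trans (le_analyticOrderAt_mul_left hψ))
    (hB.trans (le_analyticOrderAt_mul_left hψ.deriv))).trans le_analyticOrderAt_sub

theorem iteratedDeriv_odd_eq_zero_of_logDeriv_dslope {g ψ : 𝕜 → 𝕜} (μ a : 𝕜) {n : ℕ}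
    (hg : AnalyticAt 𝕜 g c) (hgodd : ∀ k < n + 2, Odd k → iteratedDeriv k g c = 0)
    (hψ : AnalyticAt 𝕜 ψ c) (hψ0 : ψ c ≠ 0)
    (hψodd : ∀ k < n + 2, Odd k → iteratedDeriv k ψ c = 0) {k : ℕ} (hk : k < n) (hkodd : Odd k) :
    iteratedDeriv k
      (fun x => μ - g x + a * dslope (logDeriv ψ) c x - 2 * logDeriv ψ x ^ 2) c = 0 := by
  set φ := logDeriv ψ
  have hφ : AnalyticAt 𝕜 φ c := hψ.logDeriv hψ0
  have hφ0 : φ c = 0 := by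
    simp [φ, logDeriv_apply, ← iteratedDeriv_one, hψodd 1 (by omega) odd_one]
  have hφsum : n + 1 ≤ analyticOrderAt (fun y => φ y + φ (2 * c - y)) c :=
    natCast_le_analyticOrderAt_logDeriv_add_comp_reflect hψ hψ0 hψodd
  have hφ₁ : n ≤ analyticOrderAt (fun y => dslope φ c y - dslope φ c (2 * c - y)) c := by
    rw [← analyticOrderAt_dslope_sub_comp_reflect_add_one hφ hφ0] at hφsum
    exact_mod_cast (ENat.add_le_add_iff_right ENat.one_ne_top).1 hφsum
  have hgσ : n ≤ analyticOrderAt (fun y => g y - g (2 * c - y)) c :=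
    ((natCast_le_analyticOrderAt_sub_comp_reflect_iff hg).2 hgodd).trans' (by norm_cast; omega)
  have hdiff : (fun y => (μ - g y + a * dslope φ c y - 2 * φ y ^ 2)
        - (μ - g (2 * c - y) + a * dslope φ c (2 * c - y) - 2 * φ (2 * c - y) ^ 2))
      = ((fun _ => a) * (fun y => dslope φ c y - dslope φ c (2 * c - y))
          - fun y => g y - g (2 * c - y))
        - (fun y => 2 * (φ y - φ (2 * c - y))) * fun y => φ y + φ (2 * c - y) := by
    funext y
    simp only [Pi.mul_apply, Pi.sub_apply]
    ring
  have hG : AnalyticAt 𝕜 (fun x => μ - g x + a * dslope φ c x - 2 * φ x ^ 2) c :=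
    ((analyticAt_const.sub hg).add (analyticAt_const.mul hφ.dslope)).sub
      (analyticAt_const.mul (hφ.pow 2))
  refine (natCast_le_analyticOrderAt_sub_comp_reflect_iff hG).1 ?_ k hk hkodd
  rw [hdiff]
  refine le_trans (le_min (le_trans (le_min ?_ hgσ) le_analyticOrderAt_sub) ?_)
    le_analyticOrderAt_sub
  · exact hφ₁.trans (le_analyticOrderAt_mul_left analyticAt_const)
  · exact (hφsum.trans' (by norm_cast; omega)).trans
      (le_analyticOrderAt_mul_left (analyticAt_const.mul (hφ.sub hφ.comp_reflect)))

end AnalyticOrder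

theorem stmt_9_general (N : ℕ) (hN : 2 ≤ N) (x₀ μ : ℂ)
    (h : ℂ → ℂ) (r : ℝ) (hr : 0 < r)
    (g : ℂ → ℂ) (hg : AnalyticAt ℂ g x₀)
    (hgh : ∀ x ∈ Metric.ball x₀ r \ {x₀},
      g x = h x + (N * (N - 1) : ℂ) / (x - x₀) ^ 2)
    (hgodd : ∀ k : ℕ, Odd k → (k : ℤ) ≤ 2 * (N : ℤ) - 3 → iteratedDeriv k g x₀ = 0)
    (ψ : ℂ → ℂ) (hψ : AnalyticAt ℂ ψ x₀) (hψ0 : ψ x₀ ≠ 0)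
    (hψodd : ∀ k : ℕ, Odd k → (k : ℤ) ≤ 2 * (N : ℤ) - 3 → iteratedDeriv k ψ x₀ = 0)
    (u : ℂ → ℂ)
    (hu : ∀ᶠ x in nhdsWithin x₀ {x₀}ᶜ, u x = (x - x₀) ^ (1 - (N : ℤ)) * ψ x) :
    ∃ g' : ℂ → ℂ, AnalyticAt ℂ g' x₀ ∧
      (∀ᶠ x in nhdsWithin x₀ {x₀}ᶜ,
        g' x = (μ - h x - 2 * (deriv u x / u x) ^ 2)
          + (((N : ℂ) - 1) * ((N : ℂ) - 2)) / (x - x₀) ^ 2) ∧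
      (∀ k : ℕ, Odd k → (k : ℤ) ≤ 2 * (N : ℤ) - 5 → iteratedDeriv k g' x₀ = 0) := by
  have hgodd' : ∀ k < 2 * N - 4 + 2, Odd k → iteratedDeriv k g x₀ = 0 :=
    fun k hk hkodd => hgodd k hkodd (by omega)
  have hψodd' : ∀ k < 2 * N - 4 + 2, Odd k → iteratedDeriv k ψ x₀ = 0 :=
    fun k hk hkodd => hψodd k hkodd (by omega)
  have hφ0 : logDeriv ψ x₀ = 0 := by
    simp [logDeriv_apply, ← iteratedDeriv_one, hψodd' 1 (by omega) odd_one]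
  have hφ := hψ.logDeriv hψ0
  refine ⟨fun x => μ - g x + 4 * ((N : ℂ) - 1) * dslope (logDeriv ψ) x₀ x - 2 * logDeriv ψ x ^ 2,
    ((analyticAt_const.sub hg).add (analyticAt_const.mul hφ.dslope)).sub
      (analyticAt_const.mul (hφ.pow 2)), ?_,
    fun k hkodd hk => iteratedDeriv_odd_eq_zero_of_logDeriv_dslope μ _ hg hgodd' hψ hψ0 hψodd'
      (by omega) hkodd⟩
  filter_upwards [logDeriv_eventuallyEq_of_eventuallyEq_zpow_mul _ hψ hψ0 hu,
    sdiff_mem_nhdsWithin_compl (Metric.ball_mem_nhds x₀ hr) _] with x hux hx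
  have hxc : x - x₀ ≠ 0 := sub_ne_zero.2 hx.2
  rw [← logDeriv_apply, hux, ← sub_smul_dslope_of_zero hφ0 x, hgh x hx, smul_eq_mul]
  push_cast
  field_simp
  ring

/-- Lemma 2 of the paper, dominant case.
Let `N ≥ 2`, let `h` have form `(F_N)` at `x₀`, and let `u` be a solution of
`u'' + h·u = 0` of the dominant form `u(x) = (x−x₀)^{1−N} ψ(x)` with `ψ` analytic
at `x₀`, `ψ(x₀) ≠ 0`, and odd Taylor coefficients of `ψ` of orders `1, 3, …, 2N−3`
vanishing. Then `h̃(x) = μ − h(x) − 2(u'(x)/u(x))²` has form `(F_{N−1})` at `x₀`: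
`h̃(x) + (N−1)(N−2)/(x−x₀)²` extends analytically across `x₀` and the odd Taylor
coefficients of this extension of orders `1, 3, …, 2N−5` vanish (for `N = 2` the
quadratic term is absent, so `h̃` itself extends analytically across `x₀`). -/
theorem stmt_9 (N : ℕ) (hN : 2 ≤ N) (x₀ μ : ℂ)
    (h : ℂ → ℂ) (r : ℝ) (hr : 0 < r)
    (hh : AnalyticOnNhd ℂ h (Metric.ball x₀ r \ {x₀}))
    (g : ℂ → ℂ) (hg : AnalyticAt ℂ g x₀)
    (hgh : ∀ x ∈ Metric.ball x₀ r \ {x₀},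
      g x = h x + (N * (N - 1) : ℂ) / (x - x₀) ^ 2)
    (hgodd : ∀ k : ℕ, Odd k → (k : ℤ) ≤ 2 * (N : ℤ) - 3 → iteratedDeriv k g x₀ = 0)
    (ψ : ℂ → ℂ) (hψ : AnalyticAt ℂ ψ x₀) (hψ0 : ψ x₀ ≠ 0)
    (hψodd : ∀ k : ℕ, Odd k → (k : ℤ) ≤ 2 * (N : ℤ) - 3 → iteratedDeriv k ψ x₀ = 0)
    (u : ℂ → ℂ)
    (hu : ∀ᶠ x in nhdsWithin x₀ {x₀}ᶜ, u x = (x - x₀) ^ (1 - (N : ℤ)) * ψ x)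
    (hode : ∀ᶠ x in nhdsWithin x₀ {x₀}ᶜ, iteratedDeriv 2 u x + h x * u x = 0) :
    ∃ g' : ℂ → ℂ, AnalyticAt ℂ g' x₀ ∧
      (∀ᶠ x in nhdsWithin x₀ {x₀}ᶜ,
        g' x = (μ - h x - 2 * (deriv u x / u x) ^ 2)
          + (((N : ℂ) - 1) * ((N : ℂ) - 2)) / (x - x₀) ^ 2) ∧
      (∀ k : ℕ, Odd k → (k : ℤ) ≤ 2 * (N : ℤ) - 5 → iteratedDeriv k g' x₀ = 0) :=
  stmt_9_general N hN x₀ μ h r hr g hg hgh hgodd ψ hψ hψ0 hψodd u hu
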